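/- Let ψ : ℝ → ℂ be a Schwartz function. Then the L^∞ norm of the Fourier transform of the tempered distribution ψ(ξ)·p.v.(1/ξ) is bounded by π times the L¹ norm of the Fourier transform of ψ; more precisely, |𝓕(ψ · p.v.(1/·))(t)| ≤ ‖𝓕ψ‖_{L¹(ℝ)} · π for all t ∈ ℝ, using that the Fourier transform of p.v.(1/ξ) is ξ ↦ -iπ·sign(ξ) (up to normalization) which has L^∞ norm π. -/

import Mathlib

/-!
Write `f ξ = ψ ξ · e^{-itξ}`, so that `f = 𝓕⁻ (𝓕 f)` with `𝓕` the `e^{-2πiwξ}`-normalised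
transform and `‖𝓕 f‖₁ = ‖𝓕 ψ‖₁`. Folding `{ε ≤ |ξ|}` onto `(ε, ∞)` and truncating at `R`,
Fubini turns `∫_ε^R (f ξ - f (-ξ)) / ξ dξ` into `∫ 𝓕 f w · 2i ∫_ε^R sin (2πwξ) / ξ dξ dw`.
The sine integrals are bounded by `6` uniformly in `w`, `ε`, `R` (integrate by parts beyond `1`),
so `‖F‖ ≤ 12 (2π)^{-1/2} ‖𝓕 ψ‖₁`, while the right-hand side of the claim equals
`2π² (2π)^{-1/2} ‖𝓕 ψ‖₁` and `12 ≤ 2π²`.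
-/

open Complex Filter MeasureTheory

open Set intervalIntegral
open scoped FourierTransform

namespace Real

lemma abs_integral_sin_div_le_two_div {a b : ℝ} (ha : 0 < a) (hab : a ≤ b) :
    |∫ t in a..b, sin t / t| ≤ 2 / a := by
  have hpos : ∀ t ∈ uIcc a b, 0 < t := fun t ht ↦ ha.trans_le (uIcc_of_le hab ▸ ht).1
  have hne : ∀ t ∈ uIcc a b, t ≠ 0 := fun t ht ↦ (hpos t ht).ne'
  have hF : ∀ t ∈ uIcc a b, HasDerivAt (fun t ↦ -cos t / t) (sin t / t + cos t / t ^ 2) t := by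
    intro t ht
    have := hne t ht
    refine ((hasDerivAt_cos t).fun_neg.fun_div (hasDerivAt_id' t) this).congr_deriv ?_
    field_simp
    ring
  have hG : ∀ t ∈ uIcc a b, HasDerivAt (fun t ↦ -t⁻¹) (1 / t ^ 2) t := by
    intro t ht
    simpa using (hasDerivAt_inv (hne t ht)).fun_neg
  have hsin : IntervalIntegrable (fun t ↦ sin t / t) volume a b :=
    (continuousOn_sin.div continuousOn_id hne).intervalIntegrable
  have hcos : IntervalIntegrable (fun t ↦ cos t / t ^ 2) volume a b :=
    (continuousOn_cos.div (continuousOn_id.pow 2) fun t ht ↦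
      pow_ne_zero 2 (hne t ht)).intervalIntegrable
  have hsq : IntervalIntegrable (fun t : ℝ ↦ 1 / t ^ 2) volume a b :=
    (continuousOn_const.div (continuousOn_id.pow 2) fun t ht ↦
      pow_ne_zero 2 (hne t ht)).intervalIntegrable
  have hparts :
      ∫ t in a..b, sin t / t = (-cos b / b - -cos a / a) - ∫ t in a..b, cos t / t ^ 2 := by
    rw [← integral_eq_sub_of_hasDerivAt hF (hsin.add hcos), integral_add hsin hcos]
    ring
  have hsq_int : ∫ t in a..b, 1 / t ^ 2 = 1 / a - 1 / b := by
    rw [integral_eq_sub_of_hasDerivAt hG hsq]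
    ring
  have hcos_le : |∫ t in a..b, cos t / t ^ 2| ≤ 1 / a - 1 / b := by
    rw [← hsq_int]
    refine (abs_integral_le_integral_abs hab).trans
      (integral_mono_on hab hcos.abs hsq fun t ht ↦ ?_)
    rw [abs_div, abs_of_pos (pow_pos (hpos t (uIcc_of_le hab ▸ ht)) 2)]
    exact div_le_div_of_nonneg_right (abs_cos_le_one t) (sq_nonneg t)
  have hbound : ∀ x, 0 < x → |-cos x / x| ≤ 1 / x := fun x hx ↦ by
    rw [abs_div, abs_neg, abs_of_pos hx]
    exact div_le_div_of_nonneg_right (abs_cos_le_one x) hx.le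
  rw [hparts]
  calc |(-cos b / b - -cos a / a) - ∫ t in a..b, cos t / t ^ 2|
      ≤ |-cos b / b| + |-cos a / a| + |∫ t in a..b, cos t / t ^ 2| :=
        (abs_sub _ _).trans (add_le_add (abs_sub _ _) le_rfl)
    _ ≤ 1 / b + 1 / a + (1 / a - 1 / b) :=
        add_le_add (add_le_add (hbound b (ha.trans_le hab)) (hbound a ha)) hcos_le
    _ = 2 / a := by ring

lemma abs_integral_sinc_le_three (x : ℝ) : |∫ t in (0 : ℝ)..x, sinc t| ≤ 3 := by
  wlog hx : 0 ≤ x generalizing x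
  · have h := this (-x) (by linarith)
    have hneg := integral_comp_neg (a := 0) (b := -x) sinc
    simp only [sinc_neg, neg_neg, neg_zero] at hneg
    rwa [hneg, integral_symm, abs_neg] at h
  have hle_length : ∀ a b : ℝ, |∫ t in a..b, sinc t| ≤ |b - a| := fun a b ↦ by
    simpa using norm_integral_le_of_norm_le_const (a := a) (b := b) fun t _ ↦
      (norm_eq_abs _).trans_le (abs_sinc_le_one t)
  rcases le_or_gt x 1 with hx1 | hx1
  · have h := hle_length 0 x
    rw [sub_zero, abs_of_nonneg hx] at h
    linarith
  · have h1x : ∫ t in (1 : ℝ)..x, sinc t = ∫ t in (1 : ℝ)..x, sin t / t :=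
      integral_congr fun t ht ↦ sinc_of_ne_zero (by linarith [(uIcc_of_le hx1.le ▸ ht).1])
    rw [← integral_add_adjacent_intervals (continuous_sinc.intervalIntegrable (μ := volume) 0 1)
      (continuous_sinc.intervalIntegrable 1 x), h1x]
    have h01 := hle_length 0 1
    have h1x_le := abs_integral_sin_div_le_two_div one_pos hx1.le
    norm_num at h01 h1x_le
    linarith [abs_add_le (∫ t in (0 : ℝ)..1, sinc t) (∫ t in (1 : ℝ)..x, sin t / t)]

lemma abs_integral_sinc_le_six (a b : ℝ) : |∫ t in a..b, sinc t| ≤ 6 := by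
  rw [← integral_interval_sub_left (continuous_sinc.intervalIntegrable (μ := volume) 0 b)
    (continuous_sinc.intervalIntegrable 0 a)]
  linarith [abs_sub (∫ t in (0 : ℝ)..b, sinc t) (∫ t in (0 : ℝ)..a, sinc t),
    abs_integral_sinc_le_three a, abs_integral_sinc_le_three b]

lemma abs_integral_sin_mul_div_le_six (c : ℝ) {a b : ℝ} (ha : 0 < a) (hb : 0 < b) :
    |∫ t in a..b, sin (c * t) / t| ≤ 6 := by
  have h : ∀ t ∈ uIcc a b, sin (c * t) / t = c * sinc (c * t) := by
    intro t ht
    have ht0 : t ≠ 0 := (lt_min ha hb).trans_le ht.1 |>.ne'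
    rcases eq_or_ne c 0 with rfl | hc
    · simp
    · rw [sinc_of_ne_zero (mul_ne_zero hc ht0)]
      field_simp
  rw [integral_congr h, intervalIntegral.integral_const_mul, mul_integral_comp_mul_left]
  exact abs_integral_sinc_le_six _ _

end Real

lemma Real.fourierInv_sub_fourierInv_neg {G : ℝ → ℂ} (hG : Integrable G) (ξ : ℝ) :
    𝓕⁻ G ξ - 𝓕⁻ G (-ξ) = ∫ w, 2 * I * Real.sin (2 * Real.pi * w * ξ) * G w := by
  have hint : ∀ x : ℝ,
      Integrable fun w : ℝ ↦ Complex.exp (((-2 * Real.pi * w * x : ℝ) : ℂ) * I) • G w := fun x ↦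
    hG.bdd_mul (c := 1) (by fun_prop) (ae_of_all _ fun w ↦ by rw [norm_exp_ofReal_mul_I])
  rw [Real.fourierInv_eq_fourier_neg, Real.fourierInv_eq_fourier_neg, neg_neg,
    Real.fourier_real_eq_integral_exp_smul,
    Real.fourier_real_eq_integral_exp_smul, ← integral_sub (hint _) (hint _)]
  refine integral_congr_ae (ae_of_all _ fun w ↦ ?_)
  simp only [smul_eq_mul, ← sub_mul]
  congr 1
  rw [exp_mul_I, exp_mul_I]
  push_cast
  rw [show -2 * (Real.pi : ℂ) * w * -ξ = 2 * Real.pi * w * ξ by ring,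
    show -2 * (Real.pi : ℂ) * w * ξ = -(2 * Real.pi * w * ξ) by ring,
    Complex.cos_neg, Complex.sin_neg]
  ring

lemma intervalIntegral_integral_mul_swap {K : ℝ → ℝ → ℂ} {G : ℝ → ℂ} {a b C : ℝ} (hab : a ≤ b)
    (hK : Measurable (Function.uncurry K)) (hKC : ∀ x ∈ Ioc a b, ∀ w, ‖K x w‖ ≤ C)
    (hG : Integrable G) :
    ∫ x in a..b, ∫ w, K x w * G w = ∫ w, (∫ x in a..b, K x w) * G w := by
  have hint : Integrable (Function.uncurry fun x w ↦ K x w * G w)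
      ((volume.restrict (Ioc a b)).prod volume) :=
    (hG.comp_snd _).bdd_mul (c := C) hK.aestronglyMeasurable
      (Measure.quasiMeasurePreserving_fst.ae (ae_restrict_mem measurableSet_Ioc)
        |>.mono fun p hp ↦ hKC p.1 hp p.2)
  simp only [integral_of_le hab, integral_integral_swap hint, MeasureTheory.integral_mul_const]

lemma norm_intervalIntegral_fourierInv_sub_neg_div_le {G : ℝ → ℂ} (hG : Integrable G) {ε R : ℝ}
    (hε : 0 < ε) (hεR : ε ≤ R) :
    ‖∫ ξ in ε..R, (𝓕⁻ G ξ - 𝓕⁻ G (-ξ)) / ξ‖ ≤ 12 * ∫ w, ‖G w‖ := by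
  set K : ℝ → ℝ → ℂ := fun ξ w ↦ 2 * I * ((Real.sin (2 * Real.pi * w * ξ) / ξ : ℝ) : ℂ)
  have hK : ∀ ξ ∈ Ioc ε R, ∀ w, ‖K ξ w‖ ≤ 2 / ε := by
    intro ξ hξ w
    have hξ0 : 0 < ξ := hε.trans hξ.1
    simp only [K, norm_mul, norm_real, norm_div, norm_ofNat, norm_I, Real.norm_eq_abs,
      abs_of_pos hξ0]
    calc 2 * 1 * (|Real.sin (2 * Real.pi * w * ξ)| / ξ) ≤ 2 * 1 * (1 / ε) := by
          gcongr
          exacts [Real.abs_sin_le_one _, hξ.1.le]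
      _ = 2 / ε := by ring
  have hKint : ∀ w, ‖∫ ξ in ε..R, K ξ w‖ ≤ 12 := by
    intro w
    simp only [K, intervalIntegral.integral_const_mul, intervalIntegral.integral_ofReal, norm_mul,
      norm_ofNat, norm_I, norm_real, Real.norm_eq_abs]
    linarith [Real.abs_integral_sin_mul_div_le_six (2 * Real.pi * w) hε (hε.trans_le hεR)]
  calc ‖∫ ξ in ε..R, (𝓕⁻ G ξ - 𝓕⁻ G (-ξ)) / ξ‖
      = ‖∫ ξ in ε..R, ∫ w, K ξ w * G w‖ := by
        congr 1
        refine intervalIntegral.integral_congr fun ξ _ ↦ ?_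
        rw [Real.fourierInv_sub_fourierInv_neg hG, ← MeasureTheory.integral_div]
        congr 1 with w
        simp only [K]
        push_cast
        ring
    _ = ‖∫ w, (∫ ξ in ε..R, K ξ w) * G w‖ := by
        rw [intervalIntegral_integral_mul_swap hεR (by fun_prop) hK hG]
    _ ≤ ∫ w, 12 * ‖G w‖ :=
        norm_integral_le_of_norm_le (hG.norm.const_mul 12) (ae_of_all _ fun w ↦ by
          rw [norm_mul]; gcongr; exact hKint w)
    _ = 12 * ∫ w, ‖G w‖ := integral_const_mul _ _

lemma integrableOn_div_of_le_abs {f : ℝ → ℂ} (hf : Integrable f) {ε : ℝ} (hε : 0 < ε) :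
    IntegrableOn (fun ξ ↦ f ξ / ξ) {ξ | ε ≤ |ξ|} := by
  refine Integrable.mono' (hf.norm.const_mul ε⁻¹).integrableOn
    (hf.aestronglyMeasurable.div₀ continuous_ofReal.aestronglyMeasurable).restrict ?_
  refine (ae_restrict_mem (measurableSet_le measurable_const measurable_abs)).mono fun ξ hξ ↦ ?_
  rw [norm_div, norm_real, Real.norm_eq_abs, div_eq_mul_inv, mul_comm]
  exact mul_le_mul_of_nonneg_right (inv_anti₀ hε hξ) (norm_nonneg _)

lemma setIntegral_le_abs_eq_setIntegral_Ioi {E : Type*} [NormedAddCommGroup E] [NormedSpace ℝ E]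
    {h : ℝ → E} {ε : ℝ} (hε : 0 < ε) (hh : IntegrableOn h {ξ | ε ≤ |ξ|}) :
    ∫ ξ in {ξ | ε ≤ |ξ|}, h ξ = ∫ ξ in Ioi ε, (h ξ + h (-ξ)) := by
  have hset : {ξ : ℝ | ε ≤ |ξ|} = Iic (-ε) ∪ Ici ε := by
    ext ξ
    simp [le_abs']
  have hdisj : Disjoint (Iic (-ε)) (Ici ε) :=
    Iic_disjoint_Ici.2 (by linarith)
  rw [hset] at hh ⊢
  rw [setIntegral_union hdisj measurableSet_Ici (hh.mono_set subset_union_left)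
    (hh.mono_set subset_union_right), ← integral_comp_neg_Ioi, ← integral_Ici_eq_integral_Ioi,
    add_comm, ← integral_add (hh.mono_set subset_union_right)
    (hh.mono_set subset_union_left).comp_neg_Ici, integral_Ici_eq_integral_Ioi]

theorem norm_setIntegral_le_abs_div_le {f : ℝ → ℂ} (hf : Integrable f) (hf' : Integrable (𝓕 f))
    (hfc : Continuous f) {ε : ℝ} (hε : 0 < ε) :
    ‖∫ ξ in {ξ | ε ≤ |ξ|}, f ξ / ξ‖ ≤ 12 * ∫ w, ‖𝓕 f w‖ := by
  have hinv : 𝓕⁻ (𝓕 f) = f := hfc.fourierInv_fourier_eq hf hf'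
  have hodd : IntegrableOn (fun ξ ↦ (f ξ - f (-ξ)) / ξ) (Ioi ε) :=
    (integrableOn_div_of_le_abs (hf.sub hf.comp_neg) hε).mono_set fun ξ (hξ : ε < ξ) ↦
      show ε ≤ |ξ| from hξ.le.trans (le_abs_self ξ)
  calc ‖∫ ξ in {ξ | ε ≤ |ξ|}, f ξ / ξ‖ = ‖∫ ξ in Ioi ε, (f ξ - f (-ξ)) / ξ‖ := by
        rw [setIntegral_le_abs_eq_setIntegral_Ioi hε (integrableOn_div_of_le_abs hf hε)]
        congr 2 with ξ
        push_cast
        ring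
    _ ≤ 12 * ∫ w, ‖𝓕 f w‖ := by
        refine le_of_tendsto (intervalIntegral_tendsto_integral_Ioi ε hodd tendsto_id).norm ?_
        filter_upwards [eventually_ge_atTop ε] with R hR
        simpa only [hinv, id] using norm_intervalIntegral_fourierInv_sub_neg_div_le hf' hε hR

lemma Real.integral_mul_exp_neg_mul_eq_fourier (f : ℝ → ℂ) (s : ℝ) :
    ∫ ξ : ℝ, f ξ * Complex.exp (-I * s * ξ) = 𝓕 f (s / (2 * Real.pi)) := by
  rw [Real.fourier_real_eq_integral_exp_smul]
  congr 1 with ξ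
  rw [smul_eq_mul, mul_comm]
  congr 2
  push_cast
  field_simp

lemma Real.fourier_mul_exp_neg_mul (f : ℝ → ℂ) (t w : ℝ) :
    𝓕 (fun ξ : ℝ ↦ f ξ * Complex.exp (-I * t * ξ)) w = 𝓕 f (w + t / (2 * Real.pi)) := by
  rw [show w + t / (2 * Real.pi) = (2 * Real.pi * w + t) / (2 * Real.pi) by field_simp,
    ← Real.integral_mul_exp_neg_mul_eq_fourier, Real.fourier_real_eq_integral_exp_smul]
  congr 1 with ξ
  rw [smul_eq_mul, mul_comm, mul_assoc, ← Complex.exp_add]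
  congr 2
  push_cast
  field_simp
  ring

lemma Real.integral_norm_mul_integral_mul_exp_neg_mul (f : ℝ → ℂ) (c : ℂ) :
    ∫ s : ℝ, ‖c * ∫ ξ : ℝ, f ξ * Complex.exp (-I * s * ξ)‖
      = ‖c‖ * (2 * Real.pi) * ∫ w, ‖𝓕 f w‖ := by
  simp_rw [Real.integral_mul_exp_neg_mul_eq_fourier, norm_mul]
  rw [MeasureTheory.integral_const_mul, Measure.integral_comp_div (fun w ↦ ‖𝓕 f w‖),
    smul_eq_mul, abs_of_pos Real.two_pi_pos]
  ring

theorem SchwartzMap.norm_setIntegral_mul_exp_neg_mul_div_le (ψ : SchwartzMap ℝ ℂ) (t : ℝ)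
    {ε : ℝ} (hε : 0 < ε) :
    ‖∫ ξ in {ξ : ℝ | ε ≤ |ξ|}, ψ ξ * Complex.exp (-I * t * ξ) / ξ‖
      ≤ 12 * ∫ w, ‖𝓕 (ψ : ℝ → ℂ) w‖ := by
  set f : ℝ → ℂ := fun ξ ↦ ψ ξ * Complex.exp (-I * t * ξ)
  have hf_fourier : 𝓕 f = fun w ↦ 𝓕 (ψ : ℝ → ℂ) (w + t / (2 * Real.pi)) :=
    funext (Real.fourier_mul_exp_neg_mul ψ t)
  have hf : Integrable f :=
    ψ.integrable.mul_bdd (c := 1) (by fun_prop) (ae_of_all _ fun ξ ↦ by simp [norm_exp])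
  have hf' : Integrable (𝓕 f) := hf_fourier ▸ (𝓕 ψ).integrable.comp_add_right _
  have hL1 : ∫ w, ‖𝓕 f w‖ = ∫ w, ‖𝓕 (ψ : ℝ → ℂ) w‖ := by
    rw [hf_fourier]
    exact integral_add_right_eq_self (fun w ↦ ‖𝓕 (ψ : ℝ → ℂ) w‖) _
  rw [← hL1]
  exact norm_setIntegral_le_abs_div_le hf hf' (by fun_prop) hε

/-- Bound for the Fourier transform of `ψ(ξ)·p.v.(1/ξ)` for a Schwartz function `ψ`:
if the principal value `F = lim_{ε→0⁺} (2π)^{-1/2} ∫_{|ξ|≥ε} ψ(ξ) e^{-itξ}/ξ dξ`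
exists, then `|F| ≤ π ‖𝓕ψ‖_{L¹}`, where `𝓕ψ(t) = (2π)^{-1/2} ∫ ψ(ξ) e^{-itξ} dξ`
(this is the convolution bound using `|𝓕(p.v.(1/·))| = π·|sign| ≤ π`). -/
theorem stmt17 (ψ : SchwartzMap ℝ ℂ) (t : ℝ) (F : ℂ)
    (hF : Tendsto (fun ε : ℝ =>
        (((2 * Real.pi) ^ (-(1 : ℝ) / 2) : ℝ) : ℂ) *
          ∫ ξ in {ξ : ℝ | ε ≤ |ξ|}, ψ ξ * Complex.exp (-Complex.I * t * ξ) / ξ)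
      (nhdsWithin 0 (Set.Ioi 0)) (nhds F)) :
    ‖F‖ ≤ Real.pi * ∫ s : ℝ,
      ‖(((2 * Real.pi) ^ (-(1 : ℝ) / 2) : ℝ) : ℂ) *
        ∫ ξ : ℝ, ψ ξ * Complex.exp (-Complex.I * s * ξ)‖ := by
  set c : ℝ := (2 * Real.pi) ^ (-(1 : ℝ) / 2)
  set L : ℝ := ∫ w, ‖𝓕 (ψ : ℝ → ℂ) w‖
  have hc : 0 < c := by positivity
  have hL : 0 ≤ L := integral_nonneg fun _ ↦ norm_nonneg _
  have hnorm_c : ‖(c : ℂ)‖ = c := by rw [norm_real, Real.norm_of_nonneg hc.le]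
  have hbound : ∀ ε ∈ Ioi (0 : ℝ),
      ‖(c : ℂ) * ∫ ξ in {ξ : ℝ | ε ≤ |ξ|}, ψ ξ * Complex.exp (-I * t * ξ) / ξ‖ ≤ c * (12 * L) :=
    fun ε hε ↦ by
      rw [norm_mul, hnorm_c]
      exact mul_le_mul_of_nonneg_left (ψ.norm_setIntegral_mul_exp_neg_mul_div_le t hε) hc.le
  have h12 : 12 ≤ 2 * Real.pi * Real.pi := by nlinarith [Real.pi_gt_three]
  calc ‖F‖ ≤ c * (12 * L) := le_of_tendsto hF.norm (eventually_nhdsWithin_of_forall hbound)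
    _ ≤ Real.pi * (c * (2 * Real.pi) * L) := by
        nlinarith [mul_le_mul_of_nonneg_right h12 (mul_nonneg hc.le hL)]
    _ = _ := by rw [Real.integral_norm_mul_integral_mul_exp_neg_mul, hnorm_c]
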